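/- Let D = (E,𝓕) be a vf-safe delta-matroid with dual D* := D*E, and let e ∈ E. Then: (1) if e is a non-trivial orientable ribbon loop of D*, then (D*∖e)_min = ((D+e)*∖e)_min; (2) if e is neither a ribbon loop nor a coloop of D*, then (D*/e)_min = ((D+e)*∖e)_min; and (3) if e is a non-trivial non-orientable ribbon loop of D*, then (D*∖e)_min = ((D+e)*/e)_min. Each equality is an equality of set systems on E − {e}. -/

import Mathlib

open scoped symmDiff

structure SetSystem (α : Type) [DecidableEq α] where
  E : Finset α
  F : Finset (Finset α)

namespace SetSystem

variable {α : Type} [DecidableEq α]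

/-- A delta-matroid: nonempty collection of feasible subsets of the ground set
satisfying the symmetric exchange axiom. -/
def IsDeltaMatroid (D : SetSystem α) : Prop :=
  D.F.Nonempty ∧ (∀ F ∈ D.F, F ⊆ D.E) ∧
    ∀ X ∈ D.F, ∀ Y ∈ D.F, ∀ u ∈ X ∆ Y, ∃ v ∈ X ∆ Y, X ∆ ({u, v} : Finset α) ∈ D.F

/-- A matroid, viewed as a delta-matroid whose feasible sets are equicardinal. -/
def IsMatroid (D : SetSystem α) : Prop :=
  D.IsDeltaMatroid ∧ ∀ F₁ ∈ D.F, ∀ F₂ ∈ D.F, F₁.card = F₂.card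

/-- The twist `D*A`. -/
def twist (D : SetSystem α) (A : Finset α) : SetSystem α :=
  ⟨D.E, D.F.image fun F => A ∆ F⟩

/-- The dual `D* := D * E`. -/
def dual (D : SetSystem α) : SetSystem α := D.twist D.E

def IsLoop (D : SetSystem α) (e : α) : Prop := ∀ F ∈ D.F, e ∉ F

def IsColoop (D : SetSystem α) (e : α) : Prop := ∀ F ∈ D.F, e ∈ F

open Classical in
/-- Deletion of a single element (when `e` is a coloop, `D∖e := D/e`). -/
noncomputable def del (D : SetSystem α) (e : α) : SetSystem α :=
  if D.IsColoop e then ⟨D.E.erase e, D.F.image fun F => F.erase e⟩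
  else ⟨D.E.erase e, D.F.filter fun F => e ∉ F⟩

open Classical in
/-- Contraction of a single element (when `e` is a loop, `D/e := D∖e`). -/
noncomputable def con (D : SetSystem α) (e : α) : SetSystem α :=
  if D.IsLoop e then ⟨D.E.erase e, D.F.filter fun F => e ∉ F⟩
  else ⟨D.E.erase e, (D.F.filter fun F => e ∈ F).image fun F => F.erase e⟩

/-- Loop complementation on a single element. -/
def lc (D : SetSystem α) (e : α) : SetSystem α :=
  ⟨D.E, D.F ∆ ((D.F.filter fun F => e ∉ F).image fun F => insert e F)⟩

/-- Loop complementation on a set of elements (applied in some order;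
the operation is order-independent). -/
noncomputable def lcSet (D : SetSystem α) (A : Finset α) : SetSystem α :=
  A.toList.foldl lc D

/-- The dual pivot `D *̄ A := ((D*A)+A)*A`. -/
noncomputable def dpivot (D : SetSystem α) (A : Finset α) : SetSystem α :=
  ((D.twist A).lcSet A).twist A

/-- Set systems reachable from `D` by sequences of twists and loop complementations. -/
inductive Reachable : SetSystem α → SetSystem α → Prop
  | refl (D : SetSystem α) : Reachable D D
  | twist (D D' : SetSystem α) (A : Finset α) (hA : A ⊆ D'.E) :
      Reachable D D' → Reachable D (D'.twist A)
  | lc (D D' : SetSystem α) (A : Finset α) (hA : A ⊆ D'.E) :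
      Reachable D D' → Reachable D (D'.lcSet A)

/-- A vf-safe delta-matroid: any sequence of twists and loop complementations
yields a delta-matroid. -/
def VfSafe (D : SetSystem α) : Prop := ∀ D', Reachable D D' → D'.IsDeltaMatroid

/-- The minimum-cardinality feasible sets. -/
def Fmin (D : SetSystem α) : Finset (Finset α) :=
  D.F.filter fun F => ∀ F' ∈ D.F, F.card ≤ F'.card

/-- The maximum-cardinality feasible sets. -/
def Fmax (D : SetSystem α) : Finset (Finset α) :=
  D.F.filter fun F => ∀ F' ∈ D.F, F'.card ≤ F.card

/-- The lower matroid `D_min`. -/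
def Dmin (D : SetSystem α) : SetSystem α := ⟨D.E, D.Fmin⟩

def IsRibbonLoop (D : SetSystem α) (e : α) : Prop := ∀ F ∈ D.Fmin, e ∉ F

def IsNonorientableRL (D : SetSystem α) (e : α) : Prop :=
  D.IsRibbonLoop e ∧ (D.twist {e}).IsRibbonLoop e

def IsOrientableRL (D : SetSystem α) (e : α) : Prop :=
  D.IsRibbonLoop e ∧ (D.dpivot {e}).IsRibbonLoop e

def IsTrivialOrientableRL (D : SetSystem α) (e : α) : Prop :=
  D.IsOrientableRL e ∧ D.IsLoop e

def IsTrivialNonorientableRL (D : SetSystem α) (e : α) : Prop :=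
  D.IsNonorientableRL e ∧ (D.lc e).IsLoop e

/-!
Write `M := D*`. Since `e ∈ E`, the dual `(D+e)*` is the dual pivot `M *̄ {e}`: it agrees with `M`
on sets containing `e`, and contains a set `X ∌ e` iff exactly one of `X`, `X ∪ {e}` is feasible
in `M`. If `e` is a ribbon loop of `M` and `m` is the minimum size of a feasible set, then every
feasible set of `M`, of `M + e` and of `M *̄ {e}` has at least `m` elements other than `e`. In a
delta-matroid with this property, the exchange axiom moves a feasible `Z ∪ {e}` with `|Z| = m`
step by step towards a feasible `m`-set `W ∌ e`, so `W ∪ {e}` is feasible as well. Running this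
descent in `M + e` and then in `M *̄ {e}` shows that, as soon as some such `Z ∪ {e}` is feasible
in `M`, an `m`-set `G ∌ e` is feasible in `M` iff `G ∪ {e}` is. In the orientable case the
ribbon-loop hypothesis on `M *̄ {e}` rules out such a `Z`, in the non-orientable case the one on
`M * {e}` produces one; then, as when `e` is not a ribbon loop of `M`, the minimum feasible sets of
both minors are read off directly.
-/

section SymmDiff

variable {e : α} {X : Finset α}

lemma singleton_symmDiff_of_mem (h : e ∈ X) : {e} ∆ X = X.erase e := by
  ext x; by_cases hx : x = e <;> simp [Finset.mem_symmDiff, hx, h]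

lemma singleton_symmDiff_of_notMem (h : e ∉ X) : {e} ∆ X = insert e X := by
  ext x; by_cases hx : x = e <;> simp [Finset.mem_symmDiff, hx, h]

lemma erase_singleton_symmDiff : ({e} ∆ X).erase e = X.erase e := by
  ext x; by_cases hx : x = e <;> simp [Finset.mem_symmDiff, hx]

lemma symmDiff_eq_insert_symmDiff_insert {A : Finset α} (heA : e ∈ A) (heX : e ∉ X) :
    A ∆ X = insert e (A ∆ insert e X) := by
  ext x; by_cases hx : x = e <;> simp [Finset.mem_symmDiff, hx, heA, heX]

lemma insert_symmDiff_pair {u v : α} (hu : u ∈ X) (hv : v ∉ X) (hue : u ≠ e) (hve : v ≠ e) :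
    insert e X ∆ {u, v} = insert e (insert v (X.erase u)) := by
  ext x
  by_cases hxe : x = e <;> by_cases hxu : x = u <;> by_cases hxv : x = v <;>
    simp_all [Finset.mem_symmDiff]

end SymmDiff

lemma ext_of_mem_iff {D D' : SetSystem α} (hE : D.E = D'.E) (hF : ∀ X, X ∈ D.F ↔ X ∈ D'.F) :
    D = D' := by
  cases D; cases D'
  congr
  exact Finset.ext hF

lemma lcSet_singleton (D : SetSystem α) (e : α) : D.lcSet {e} = D.lc e := by
  simp [lcSet]

lemma lcSet_E (D : SetSystem α) (A : Finset α) : (D.lcSet A).E = D.E := by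
  rw [lcSet]
  induction A.toList generalizing D with
  | nil => rfl
  | cons a l ih => exact ih (D.lc a)

lemma dpivot_E (D : SetSystem α) (A : Finset α) : (D.dpivot A).E = D.E :=
  lcSet_E _ _

lemma dpivot_singleton (D : SetSystem α) (e : α) :
    D.dpivot {e} = ((D.twist {e}).lc e).twist {e} := by
  rw [dpivot, lcSet_singleton]

lemma del_E (D : SetSystem α) (e : α) : (D.del e).E = D.E.erase e := by
  unfold del; split_ifs <;> rfl

lemma con_E (D : SetSystem α) (e : α) : (D.con e).E = D.E.erase e := by
  unfold con; split_ifs <;> rfl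

section Membership

variable {D : SetSystem α} {e : α} {X : Finset α}

lemma mem_twist_iff {A : Finset α} : X ∈ (D.twist A).F ↔ A ∆ X ∈ D.F := by
  simp only [twist, Finset.mem_image]
  exact ⟨fun ⟨F, hF, hFX⟩ => hFX ▸ by rwa [symmDiff_symmDiff_cancel_left],
    fun h => ⟨A ∆ X, h, symmDiff_symmDiff_cancel_left A X⟩⟩

lemma mem_lc_iff :
    X ∈ (D.lc e).F ↔ Xor (X ∈ D.F) (e ∈ X ∧ X.erase e ∈ D.F) := by
  have hins : (X ∈ (D.F.filter fun F => e ∉ F).image fun F => insert e F) ↔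
      e ∈ X ∧ X.erase e ∈ D.F := by
    simp only [Finset.mem_image, Finset.mem_filter]
    constructor
    · rintro ⟨F, ⟨hF, heF⟩, rfl⟩
      exact ⟨Finset.mem_insert_self e F, by rwa [Finset.erase_insert heF]⟩
    · rintro ⟨heX, hX⟩
      exact ⟨X.erase e, ⟨hX, Finset.notMem_erase e X⟩, Finset.insert_erase heX⟩
  rw [lc, Finset.mem_symmDiff, hins]
  rfl

lemma mem_lc_of_notMem (h : e ∉ X) : X ∈ (D.lc e).F ↔ X ∈ D.F := by
  simp [mem_lc_iff, Xor, h]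

lemma insert_mem_lc (h : e ∉ X) : insert e X ∈ (D.lc e).F ↔ Xor (X ∈ D.F) (insert e X ∈ D.F) := by
  rw [mem_lc_iff, Finset.erase_insert h, xor_comm (X ∈ D.F)]
  simp only [Finset.mem_insert_self, true_and]

lemma exists_erase_eq_of_mem_lc (hX : X ∈ (D.lc e).F) : ∃ S ∈ D.F, S.erase e = X.erase e := by
  rcases mem_lc_iff.mp hX with ⟨hX, -⟩ | ⟨⟨-, hX⟩, -⟩
  · exact ⟨X, hX, rfl⟩
  · exact ⟨X.erase e, hX, Finset.erase_idem⟩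

lemma exists_erase_eq_of_mem_twist_singleton (hX : X ∈ (D.twist {e}).F) :
    ∃ S ∈ D.F, S.erase e = X.erase e :=
  ⟨{e} ∆ X, mem_twist_iff.mp hX, erase_singleton_symmDiff⟩

lemma mem_dpivot_of_mem (h : e ∈ X) : X ∈ (D.dpivot {e}).F ↔ X ∈ D.F := by
  rw [dpivot_singleton, mem_twist_iff, singleton_symmDiff_of_mem h,
    mem_lc_of_notMem (Finset.notMem_erase e X), mem_twist_iff,
    singleton_symmDiff_of_notMem (Finset.notMem_erase e X), Finset.insert_erase h]

lemma mem_dpivot_of_notMem (h : e ∉ X) :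
    X ∈ (D.dpivot {e}).F ↔ Xor (X ∈ D.F) (insert e X ∈ D.F) := by
  rw [dpivot_singleton, mem_twist_iff, singleton_symmDiff_of_notMem h, insert_mem_lc h,
    mem_twist_iff, mem_twist_iff, singleton_symmDiff_of_notMem h,
    singleton_symmDiff_of_mem (Finset.mem_insert_self e X), Finset.erase_insert h, xor_comm]

lemma exists_erase_eq_of_mem_dpivot (hX : X ∈ (D.dpivot {e}).F) :
    ∃ S ∈ D.F, S.erase e = X.erase e := by
  rw [dpivot_singleton] at hX
  obtain ⟨S₁, hS₁, h₁⟩ := exists_erase_eq_of_mem_twist_singleton hX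
  obtain ⟨S₂, hS₂, h₂⟩ := exists_erase_eq_of_mem_lc hS₁
  obtain ⟨S₃, hS₃, h₃⟩ := exists_erase_eq_of_mem_twist_singleton hS₂
  exact ⟨S₃, hS₃, h₃.trans (h₂.trans h₁)⟩

lemma insert_mem_dpivot : insert e X ∈ (D.dpivot {e}).F ↔ insert e X ∈ D.F :=
  mem_dpivot_of_mem (Finset.mem_insert_self e X)

lemma mem_del_iff (h : ¬ D.IsColoop e) : X ∈ (D.del e).F ↔ X ∈ D.F ∧ e ∉ X := by
  unfold del; rw [if_neg h]; exact Finset.mem_filter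

lemma mem_con_iff (h : ¬ D.IsLoop e) : X ∈ (D.con e).F ↔ e ∉ X ∧ insert e X ∈ D.F := by
  unfold con; rw [if_neg h]
  simp only [Finset.mem_image, Finset.mem_filter]
  constructor
  · rintro ⟨G, ⟨hG, heG⟩, rfl⟩
    exact ⟨Finset.notMem_erase e G, by rwa [Finset.insert_erase heG]⟩
  · rintro ⟨heX, hX⟩
    exact ⟨insert e X, ⟨hX, Finset.mem_insert_self e X⟩, Finset.erase_insert heX⟩

end Membership

lemma dual_lc_eq_dpivot_dual {D : SetSystem α} {e : α} (he : e ∈ D.E) :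
    (D.lc e).dual = D.dual.dpivot {e} := by
  refine ext_of_mem_iff (by rw [dpivot_singleton]; rfl) fun X => ?_
  rw [dual, mem_twist_iff]
  change D.E ∆ X ∈ (D.lc e).F ↔ _
  by_cases heX : e ∈ X
  · have : e ∉ D.E ∆ X := by simp [Finset.mem_symmDiff, he, heX]
    rw [mem_lc_of_notMem this, mem_dpivot_of_mem heX, dual, mem_twist_iff]
  · rw [mem_dpivot_of_notMem heX, dual, mem_twist_iff, mem_twist_iff,
      symmDiff_eq_insert_symmDiff_insert he heX, insert_mem_lc (by simp [Finset.mem_symmDiff, he]),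
      ← symmDiff_eq_insert_symmDiff_insert he heX, xor_comm]

lemma mem_Fmin_iff {D : SetSystem α} {X : Finset α} :
    X ∈ D.Fmin ↔ X ∈ D.F ∧ ∀ Y ∈ D.F, X.card ≤ Y.card := Finset.mem_filter

lemma Dmin_eq_of_card_eq {S T : SetSystem α} (hE : S.E = T.E) {k : ℕ}
    (hS : ∀ X ∈ S.F, k ≤ X.card) (hT : ∀ X ∈ T.F, k ≤ X.card) {X₀ : Finset α} (hX₀ : X₀ ∈ S.F)
    (hX₀k : X₀.card = k) (hST : ∀ X : Finset α, X.card = k → (X ∈ S.F ↔ X ∈ T.F)) :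
    S.Dmin = T.Dmin := by
  have hFmin : S.Fmin = T.Fmin := by
    have hX₀T := (hST X₀ hX₀k).mp hX₀
    ext X
    simp only [mem_Fmin_iff]
    constructor
    · rintro ⟨hX, hmin⟩
      have hXk : X.card = k := le_antisymm (hX₀k ▸ hmin X₀ hX₀) (hS X hX)
      exact ⟨(hST X hXk).mp hX, fun Y hY => hXk ▸ hT Y hY⟩
    · rintro ⟨hX, hmin⟩
      have hXk : X.card = k := le_antisymm (hX₀k ▸ hmin X₀ hX₀T) (hT X hX)
      exact ⟨(hST X hXk).mpr hX, fun Y hY => hXk ▸ hS Y hY⟩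
  simp only [Dmin, hE, hFmin]

lemma IsRibbonLoop.exists_forall_le_card_erase {M : SetSystem α} {e : α} (hM : M.F.Nonempty)
    (hRL : M.IsRibbonLoop e) : ∃ W ∈ M.F, e ∉ W ∧ ∀ R ∈ M.F, W.card ≤ (R.erase e).card := by
  obtain ⟨W, hW, hWle⟩ := M.F.exists_min_image Finset.card hM
  refine ⟨W, hW, hRL W (mem_Fmin_iff.mpr ⟨hW, hWle⟩), fun R hR => ?_⟩
  by_cases heR : e ∈ R
  · have hWR : W.card < R.card := by
      by_contra! h
      exact hRL R (mem_Fmin_iff.mpr ⟨hR, fun Y hY => h.trans (hWle Y hY)⟩) heR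
    rw [Finset.card_erase_of_mem heR]
    omega
  · rw [Finset.erase_eq_of_notMem heR]
    exact hWle R hR

lemma IsRibbonLoop.exists_notMem_card_eq {N : SetSystem α} {e : α} (hRL : N.IsRibbonLoop e)
    {m : ℕ} (hN : ∀ R ∈ N.F, m ≤ (R.erase e).card) {Z : Finset α} (hZ : insert e Z ∈ N.F)
    (heZ : e ∉ Z) (hZm : Z.card = m) : ∃ G ∈ N.F, e ∉ G ∧ G.card = m := by
  by_contra! hG
  refine hRL _ (mem_Fmin_iff.mpr ⟨hZ, fun R hR => ?_⟩) (Finset.mem_insert_self e Z)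
  have hRm := hN R hR
  rw [Finset.card_insert_of_notMem heZ, hZm]
  by_cases heR : e ∈ R
  · rw [Finset.card_erase_of_mem heR] at hRm
    have := Finset.card_pos.mpr ⟨e, heR⟩
    omega
  · rw [Finset.erase_eq_of_notMem heR] at hRm
    have := hG R hR heR
    omega

theorem IsDeltaMatroid.insert_mem_of_insert_mem {N : SetSystem α} (hN : N.IsDeltaMatroid)
    {e : α} {m : ℕ} (hcard : ∀ R ∈ N.F, m ≤ (R.erase e).card) {W : Finset α} (hW : W ∈ N.F)
    (heW : e ∉ W) (hWm : W.card = m) {Z : Finset α} (hZ : insert e Z ∈ N.F) (heZ : e ∉ Z)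
    (hZm : Z.card = m) : insert e W ∈ N.F := by
  obtain ⟨n, hn⟩ : ∃ n, (Z \ W).card = n := ⟨_, rfl⟩
  induction n using Nat.strong_induction_on generalizing Z with
  | _ n ih =>
  obtain hZW | ⟨u, hu⟩ := (Z \ W).eq_empty_or_nonempty
  · have : Z = W :=
      Finset.eq_of_subset_of_card_le (Finset.sdiff_eq_empty_iff_subset.mp hZW) (by omega)
    exact this ▸ hZ
  obtain ⟨huZ, huW⟩ := Finset.mem_sdiff.mp hu
  have hue : u ≠ e := ne_of_mem_of_not_mem huZ heZ
  obtain ⟨v, hv, hX⟩ := hN.2.2 _ hZ W hW u (by simp [Finset.mem_symmDiff, huZ, huW])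
  -- exchanging `v ∈ Z ∪ {e}` would leave a feasible set with fewer than `m` elements besides `e`
  have hvX : v ∉ insert e Z := by
    intro hvX
    have hsub : (insert e Z ∆ {u, v}).erase e ⊆ Z.erase u := by
      intro x hx
      simp only [Finset.mem_erase, Finset.mem_symmDiff, Finset.mem_insert,
        Finset.mem_singleton] at hx hvX ⊢
      rcases hx with ⟨hxe, ⟨hxZ, hxuv⟩ | ⟨rfl | rfl, hxZ⟩⟩
      · exact ⟨fun h => hxuv (Or.inl h), hxZ.resolve_left hxe⟩
      · exact absurd (Or.inr huZ) hxZ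
      · exact absurd hvX hxZ
    have := (hcard _ hX).trans (Finset.card_le_card hsub)
    rw [Finset.card_erase_of_mem huZ] at this
    have := Finset.card_pos.mpr ⟨u, huZ⟩
    omega
  have hvW : v ∈ W := by
    simpa [Finset.mem_symmDiff, hvX] using hv
  have hve : v ≠ e := ne_of_mem_of_not_mem hvW heW
  have hvZ : v ∉ Z := fun h => hvX (Finset.mem_insert_of_mem h)
  rw [insert_symmDiff_pair huZ hvZ hue hve] at hX
  refine ih _ ?_ hX ?_ ?_ rfl
  · rw [Finset.insert_sdiff_of_mem _ hvW, Finset.erase_sdiff_comm, Finset.card_erase_of_mem hu]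
    have := Finset.card_pos.mpr ⟨u, hu⟩
    omega
  · simp [hve.symm, heZ]
  · rw [Finset.card_insert_of_notMem (fun h => hvZ (Finset.mem_of_mem_erase h)),
      Finset.card_erase_of_mem huZ]
    have := Finset.card_pos.mpr ⟨u, huZ⟩
    omega

section LowerMatroids

variable {M : SetSystem α} {e : α}

lemma forall_le_card_erase_of_erase_eq {N : SetSystem α} {m : ℕ}
    (hNM : ∀ R ∈ N.F, ∃ S ∈ M.F, S.erase e = R.erase e)
    (hcard : ∀ S ∈ M.F, m ≤ (S.erase e).card) : ∀ R ∈ N.F, m ≤ (R.erase e).card := fun R hR => by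
  obtain ⟨S, hS, hSR⟩ := hNM R hR
  exact hSR ▸ hcard S hS

theorem mem_iff_insert_mem_of_card_eq (hH : (M.lc e).IsDeltaMatroid)
    (hK : (M.dpivot {e}).IsDeltaMatroid) {m : ℕ} (hcard : ∀ R ∈ M.F, m ≤ (R.erase e).card)
    {W : Finset α} (hW : W ∈ M.F) (heW : e ∉ W) (hWm : W.card = m)
    {Z : Finset α} (hZ : insert e Z ∈ M.F) (heZ : e ∉ Z) (hZm : Z.card = m)
    {G : Finset α} (heG : e ∉ G) (hGm : G.card = m) : G ∈ M.F ↔ insert e G ∈ M.F := by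
  have hcardH := forall_le_card_erase_of_erase_eq (fun _ => exists_erase_eq_of_mem_lc) hcard
  have hcardK := forall_le_card_erase_of_erase_eq (fun _ => exists_erase_eq_of_mem_dpivot) hcard
  by_contra hG
  have hGH : insert e G ∈ (M.lc e).F := (insert_mem_lc heG).mpr ((xor_iff_not_iff _ _).mpr hG)
  have hWH : insert e W ∈ (M.lc e).F :=
    hH.insert_mem_of_insert_mem hcardH ((mem_lc_of_notMem heW).mpr hW) heW hWm hGH heG hGm
  have hWK : W ∈ (M.dpivot {e}).F := (mem_dpivot_of_notMem heW).mpr ((insert_mem_lc heW).mp hWH)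
  have hWeK : insert e W ∈ (M.dpivot {e}).F :=
    hK.insert_mem_of_insert_mem hcardK hWK heW hWm (insert_mem_dpivot.mpr hZ) heZ hZm
  exact (xor_iff_not_iff _ _).mp ((insert_mem_lc heW).mp hWH)
    (iff_of_true hW (insert_mem_dpivot.mp hWeK))

theorem Dmin_del_eq_Dmin_dpivot_del (hM : M.F.Nonempty) (hH : (M.lc e).IsDeltaMatroid)
    (hK : (M.dpivot {e}).IsDeltaMatroid) (hRL : M.IsRibbonLoop e)
    (hRLK : (M.dpivot {e}).IsRibbonLoop e) : (M.del e).Dmin = ((M.dpivot {e}).del e).Dmin := by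
  obtain ⟨W, hW, heW, hcard⟩ := hRL.exists_forall_le_card_erase hM
  have hWle : ∀ R ∈ M.F, W.card ≤ R.card := fun R hR => (hcard R hR).trans Finset.card_erase_le
  have hcardK := forall_le_card_erase_of_erase_eq (fun _ => exists_erase_eq_of_mem_dpivot) hcard
  have hnoZ : ∀ Z, e ∉ Z → Z.card = W.card → insert e Z ∉ M.F := by
    intro Z heZ hZm hZ
    obtain ⟨G, hGK, heG, hGm⟩ :=
      hRLK.exists_notMem_card_eq hcardK (insert_mem_dpivot.mpr hZ) heZ hZm
    exact (xor_iff_not_iff _ _).mp ((mem_dpivot_of_notMem heG).mp hGK)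
      (mem_iff_insert_mem_of_card_eq hH hK hcard hW heW rfl hZ heZ hZm heG hGm)
  have hWK : W ∈ (M.dpivot {e}).F :=
    (mem_dpivot_of_notMem heW).mpr (Or.inl ⟨hW, hnoZ W heW rfl⟩)
  have hnc : ¬ M.IsColoop e := fun h => heW (h W hW)
  have hncK : ¬ (M.dpivot {e}).IsColoop e := fun h => heW (h W hWK)
  refine Dmin_eq_of_card_eq (by rw [del_E, del_E, dpivot_E])
    (fun X hX => hWle X ((mem_del_iff hnc).mp hX).1) (fun X hX => ?_)
    ((mem_del_iff hnc).mpr ⟨hW, heW⟩) rfl (fun X hXm => ?_)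
  · obtain ⟨hXK, heX⟩ := (mem_del_iff hncK).mp hX
    simpa [Finset.erase_eq_of_notMem heX] using hcardK X hXK
  · rw [mem_del_iff hnc, mem_del_iff hncK]
    by_cases heX : e ∈ X
    · simp [heX]
    · simp [heX, mem_dpivot_of_notMem heX, hnoZ X heX hXm, Xor]

theorem Dmin_con_eq_Dmin_dpivot_del (hRL : ¬ M.IsRibbonLoop e) :
    (M.con e).Dmin = ((M.dpivot {e}).del e).Dmin := by
  obtain ⟨X₁, hX₁min, heX₁⟩ : ∃ X₁ ∈ M.Fmin, e ∈ X₁ := by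
    simpa [IsRibbonLoop] using hRL
  obtain ⟨hX₁, hX₁le⟩ := mem_Fmin_iff.mp hX₁min
  set Z₁ := X₁.erase e
  have heZ₁ : e ∉ Z₁ := Finset.notMem_erase e X₁
  have hX₁Z₁ : insert e Z₁ = X₁ := Finset.insert_erase heX₁
  have hZ₁card : X₁.card = Z₁.card + 1 := (Finset.card_erase_add_one heX₁).symm
  have hsmall : ∀ X, X.card = Z₁.card → X ∉ M.F := fun X hXm hX => by
    have := hX₁le X hX; omega
  have hZ₁K : Z₁ ∈ (M.dpivot {e}).F :=
    (mem_dpivot_of_notMem heZ₁).mpr (Or.inr ⟨hX₁Z₁ ▸ hX₁, hsmall Z₁ rfl⟩)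
  have hnl : ¬ M.IsLoop e := fun h => h X₁ hX₁ heX₁
  have hncK : ¬ (M.dpivot {e}).IsColoop e := fun h => heZ₁ (h Z₁ hZ₁K)
  refine Dmin_eq_of_card_eq (by rw [con_E, del_E, dpivot_E]) (fun X hX => ?_) (fun X hX => ?_)
    ((mem_con_iff hnl).mpr ⟨heZ₁, hX₁Z₁ ▸ hX₁⟩) rfl (fun X hXm => ?_)
  · obtain ⟨heX, hX⟩ := (mem_con_iff hnl).mp hX
    have := hX₁le _ hX
    rw [Finset.card_insert_of_notMem heX] at this
    omega
  · obtain ⟨hXK, heX⟩ := (mem_del_iff hncK).mp hX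
    rcases (mem_dpivot_of_notMem heX).mp hXK with ⟨hX, -⟩ | ⟨hX, -⟩
    · have := hX₁le _ hX; omega
    · have := hX₁le _ hX
      rw [Finset.card_insert_of_notMem heX] at this
      omega
  · rw [mem_con_iff hnl, mem_del_iff hncK]
    by_cases heX : e ∈ X
    · simp [heX]
    · simp [heX, mem_dpivot_of_notMem heX, hsmall X hXm, Xor]

theorem Dmin_del_eq_Dmin_dpivot_con (hM : M.F.Nonempty) (hH : (M.lc e).IsDeltaMatroid)
    (hK : (M.dpivot {e}).IsDeltaMatroid) (hRL : M.IsRibbonLoop e)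
    (hRLt : (M.twist {e}).IsRibbonLoop e) : (M.del e).Dmin = ((M.dpivot {e}).con e).Dmin := by
  obtain ⟨W, hW, heW, hcard⟩ := hRL.exists_forall_le_card_erase hM
  have hWle : ∀ R ∈ M.F, W.card ≤ R.card := fun R hR => (hcard R hR).trans Finset.card_erase_le
  have hWt : insert e W ∈ (M.twist {e}).F := by
    rwa [mem_twist_iff, singleton_symmDiff_of_mem (Finset.mem_insert_self e W),
      Finset.erase_insert heW]
  have hcardt :=
    forall_le_card_erase_of_erase_eq (fun _ => exists_erase_eq_of_mem_twist_singleton) hcard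
  obtain ⟨Z, hZt, heZ, hZm⟩ := hRLt.exists_notMem_card_eq hcardt hWt heW rfl
  rw [mem_twist_iff, singleton_symmDiff_of_notMem heZ] at hZt
  have hnc : ¬ M.IsColoop e := fun h => heW (h W hW)
  have hnlK : ¬ (M.dpivot {e}).IsLoop e :=
    fun h => h _ (insert_mem_dpivot.mpr hZt) (Finset.mem_insert_self e Z)
  refine Dmin_eq_of_card_eq (by rw [del_E, con_E, dpivot_E])
    (fun X hX => hWle X ((mem_del_iff hnc).mp hX).1) (fun X hX => ?_)
    ((mem_del_iff hnc).mpr ⟨hW, heW⟩) rfl (fun X hXm => ?_)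
  · obtain ⟨heX, hXK⟩ := (mem_con_iff hnlK).mp hX
    simpa [Finset.erase_insert heX] using hcard _ (insert_mem_dpivot.mp hXK)
  · rw [mem_del_iff hnc, mem_con_iff hnlK, insert_mem_dpivot]
    by_cases heX : e ∈ X
    · simp [heX]
    · simp [heX, mem_iff_insert_mem_of_card_eq hH hK hcard hW heW rfl hZt heZ hZm heX hXm]

end LowerMatroids

lemma Reachable.dual {D D' : SetSystem α} (h : Reachable D D') : Reachable D D'.dual :=
  .twist D D' D'.E subset_rfl h

lemma Reachable.dpivot {D D' : SetSystem α} (h : Reachable D D') {A : Finset α} (hA : A ⊆ D'.E) :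
    Reachable D (D'.dpivot A) :=
  .twist _ _ A (by rwa [lcSet_E]) (.lc _ _ A hA (.twist _ _ A hA h))

/-- Lower matroids of minors of `D*` and `(D+e)*`. -/
theorem dual_min_of_minors (D : SetSystem α) (hD : D.VfSafe) (e : α) (he : e ∈ D.E) :
    ((D.dual.IsOrientableRL e ∧ ¬ D.dual.IsLoop e) →
      (D.dual.del e).Dmin = ((D.lc e).dual.del e).Dmin) ∧
    ((¬ D.dual.IsRibbonLoop e ∧ ¬ D.dual.IsColoop e) →
      (D.dual.con e).Dmin = ((D.lc e).dual.del e).Dmin) ∧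
    ((D.dual.IsNonorientableRL e ∧ ¬ (D.dual.lc e).IsLoop e) →
      (D.dual.del e).Dmin = ((D.lc e).dual.con e).Dmin) := by
  have hdual : Reachable D D.dual := (Reachable.refl D).dual
  have he' : {e} ⊆ D.dual.E := Finset.singleton_subset_iff.mpr he
  have hM : D.dual.F.Nonempty := (hD _ hdual).1
  have hH : (D.dual.lc e).IsDeltaMatroid := lcSet_singleton D.dual e ▸ hD _ (.lc _ _ _ he' hdual)
  have hK : (D.dual.dpivot {e}).IsDeltaMatroid := hD _ (hdual.dpivot he')
  rw [dual_lc_eq_dpivot_dual he]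
  exact ⟨fun ⟨⟨hRL, hRLK⟩, _⟩ => Dmin_del_eq_Dmin_dpivot_del hM hH hK hRL hRLK,
    fun ⟨hRL, _⟩ => Dmin_con_eq_Dmin_dpivot_del hRL,
    fun ⟨⟨hRL, hRLt⟩, _⟩ => Dmin_del_eq_Dmin_dpivot_con hM hH hK hRL hRLt⟩

end SetSystem
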